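/- arXiv:2210.01554 — 4 statements merged into one kernel-verified Lean document; each statement's English description precedes it below -/
import Mathlib

section
/- Let $g\in\mathcal{C}^l([0,1])$ with $l\geq 2$, let $a\in\{1,\dots,l-1\}$, let $\kappa\in\mathbb{R}^l$ have distinct entries, and let $w=A_\kappa^{-1}e^{(a)}$ where $e^{(a)}\in\mathbb{R}^l$ has $a!$ in position $a+1$ and zeros elsewhere, and $A_\kappa$ is the Vandermonde matrix with $(A_\kappa)_{i,j}=\kappa_j^{i-1}$. Then for any $x\in[0,1]$ and $h>0$ with $x+\kappa_j h\in(0,1)$ for all $j$, we have $\left|h^{-a}\sum_{j=1}^l w_j g(x+\kappa_j h)-g^{(a)}(x)\right|\leq h^{l-a}\,\|g^{(l)}\|_\infty\sum_{j=1}^l|w_j\kappa_j^l|$. -/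
/-!
Expand every `g (x + κ j * h)` to order `l - 1` around `x`. Since `w` solves the transposed
Vandermonde system, `∑ j, w j * κ j ^ k = a! δ_{k a}` for `k < l`, so the weighted sum of the Taylor
polynomials is exactly `h ^ a * g⁽ᵃ⁾ x`. What remains is the weighted sum of the Taylor remainders,
each bounded by `‖g⁽ˡ⁾‖ * |κ j * h| ^ l / (l - 1)!` by the mean value inequality.
-/

open Set Finset Nat Matrix

theorem Convex.norm_sub_taylorWithinEval_le {E : Type*} [NormedAddCommGroup E] [NormedSpace ℝ E]
    {f : ℝ → E} {s : Set ℝ} {n : ℕ} {C x₀ x : ℝ} (hs : Convex ℝ s) (hs' : UniqueDiffOn ℝ s)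
    (hf : ContDiffOn ℝ (n + 1) f s) (hC : ∀ y ∈ s, ‖iteratedDerivWithin (n + 1) f s y‖ ≤ C)
    (hx₀ : x₀ ∈ s) (hx : x ∈ s) :
    ‖f x - taylorWithinEval f n s x₀ x‖ ≤ C * |x - x₀| ^ (n + 1) / n ! := by
  have hseg : uIcc x₀ x ⊆ s := hs.ordConnected.uIcc_subset hx₀ hx
  -- The Taylor polynomial, as a function of its base point, runs from its value at `x₀` to `f x`.
  have hderiv : ∀ t ∈ uIcc x₀ x, HasDerivWithinAt (fun y ↦ taylorWithinEval f n s y x)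
      (((n ! : ℝ)⁻¹ * (x - t) ^ n) • iteratedDerivWithin (n + 1) f s t) (uIcc x₀ x) t :=
    fun t ht ↦ (hasDerivWithinAt_taylorWithinEval hs' self_mem_nhdsWithin (hseg ht) subset_rfl
      hf.of_succ ((hf.differentiableOn_iteratedDerivWithin (mod_cast n.lt_succ_self) hs') t
        (hseg ht))).mono hseg
  have hbound : ∀ t ∈ uIcc x₀ x,
      ‖((n ! : ℝ)⁻¹ * (x - t) ^ n) • iteratedDerivWithin (n + 1) f s t‖ ≤
        (n ! : ℝ)⁻¹ * |x - x₀| ^ n * C := by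
    intro t ht
    rw [norm_smul, Real.norm_eq_abs, abs_mul, abs_pow, abs_inv, Nat.abs_cast]
    gcongr (n ! : ℝ)⁻¹ * ?_ ^ n * ?_
    · exact abs_sub_right_of_mem_uIcc ht
    · exact hC t (hseg ht)
  have hmvt := (convex_uIcc x₀ x).norm_image_sub_le_of_norm_hasDerivWithin_le hderiv hbound
    left_mem_uIcc right_mem_uIcc
  rw [taylorWithinEval_self, Real.norm_eq_abs (x - x₀)] at hmvt
  calc _ ≤ (n ! : ℝ)⁻¹ * |x - x₀| ^ n * C * |x - x₀| := hmvt
    _ = C * |x - x₀| ^ (n + 1) / n ! := by ring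

theorem sum_mul_pow_eq_of_eq_vandermonde_inv_mulVec {K : Type*} [Field K] {n : ℕ}
    {κ : Fin n → K} (hκ : Function.Injective κ) {e w : Fin n → K}
    (hw : w = (Matrix.of fun i j : Fin n => κ j ^ (i : ℕ))⁻¹.mulVec e) (i : Fin n) :
    ∑ j, w j * κ j ^ (i : ℕ) = e i := by
  have hA : (Matrix.of fun i j : Fin n => κ j ^ (i : ℕ)) = (Matrix.vandermonde κ)ᵀ := by
    ext i j
    simp [Matrix.vandermonde]
  have hunit : IsUnit (Matrix.vandermonde κ)ᵀ.det := by
    rw [Matrix.det_transpose, isUnit_iff_ne_zero]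
    exact Matrix.det_vandermonde_ne_zero_iff.mpr hκ
  rw [hA] at hw
  have hmoment := congrFun (congrArg (Matrix.vandermonde κ)ᵀ.mulVec hw) i
  simp only [Matrix.mulVec_mulVec, Matrix.mul_nonsing_inv _ hunit, Matrix.one_mulVec] at hmoment
  rw [← hmoment]
  simp [Matrix.mulVec, dotProduct, Matrix.vandermonde, mul_comm]

theorem sum_mul_taylorWithinEval_eq {ι : Type*} [Fintype ι] (f : ℝ → ℝ) (s : Set ℝ)
    {n a : ℕ} (ha : a ≤ n) {κ w : ι → ℝ}
    (hmom : ∀ k ≤ n, ∑ j, w j * κ j ^ k = if k = a then (a ! : ℝ) else 0) (x h : ℝ) :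
    ∑ j, w j * taylorWithinEval f n s x (x + κ j * h) = h ^ a * iteratedDerivWithin a f s x := by
  have hterm : ∀ k ∈ range (n + 1),
      ∑ j, w j * (((k ! : ℝ)⁻¹ * (κ j * h) ^ k) * iteratedDerivWithin k f s x) =
        (k ! : ℝ)⁻¹ * h ^ k * iteratedDerivWithin k f s x * ∑ j, w j * κ j ^ k := by
    intro k _
    rw [Finset.mul_sum]
    exact Finset.sum_congr rfl fun j _ ↦ by ring
  simp_rw [taylor_within_apply, add_sub_cancel_left, smul_eq_mul, Finset.mul_sum]
  rw [Finset.sum_comm, Finset.sum_congr rfl hterm]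
  rw [Finset.sum_eq_single_of_mem a (mem_range.mpr (Nat.lt_succ_of_le ha))]
  · rw [hmom a ha, if_pos rfl]
    field_simp
  · intro k hk hka
    rw [hmom k (mem_range_succ_iff.mp hk), if_neg hka, mul_zero]

theorem abs_sum_mul_sub_pow_mul_iteratedDerivWithin_le {ι : Type*} [Fintype ι] {g : ℝ → ℝ}
    {s : Set ℝ} {n a : ℕ} {M x h : ℝ} {κ w : ι → ℝ} (hs : Convex ℝ s) (hs' : UniqueDiffOn ℝ s)
    (hg : ContDiffOn ℝ (n + 1) g s) (hM : ∀ y ∈ s, |iteratedDerivWithin (n + 1) g s y| ≤ M)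
    (hx : x ∈ s) (hh : 0 ≤ h) (hxκ : ∀ j, x + κ j * h ∈ s) (ha : a ≤ n)
    (hmom : ∀ k ≤ n, ∑ j, w j * κ j ^ k = if k = a then (a ! : ℝ) else 0) :
    |∑ j, w j * g (x + κ j * h) - h ^ a * iteratedDerivWithin a g s x| ≤
      h ^ (n + 1) * M / n ! * ∑ j, |w j * κ j ^ (n + 1)| := by
  have hremainder : ∀ j, |g (x + κ j * h) - taylorWithinEval g n s x (x + κ j * h)| ≤
      M * |κ j * h| ^ (n + 1) / n ! := fun j ↦ by
    simpa [← Real.norm_eq_abs] using hs.norm_sub_taylorWithinEval_le hs' hg hM hx (hxκ j)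
  rw [← sum_mul_taylorWithinEval_eq g s ha hmom x h, ← Finset.sum_sub_distrib, Finset.mul_sum]
  refine (Finset.abs_sum_le_sum_abs _ _).trans (Finset.sum_le_sum fun j _ ↦ ?_)
  calc |w j * g (x + κ j * h) - w j * taylorWithinEval g n s x (x + κ j * h)|
      ≤ |w j| * (M * |κ j * h| ^ (n + 1) / n !) := by
        rw [← mul_sub, abs_mul]
        exact mul_le_mul_of_nonneg_left (hremainder j) (abs_nonneg _)
    _ = h ^ (n + 1) * M / n ! * |w j * κ j ^ (n + 1)| := by
        rw [abs_mul, abs_mul, abs_pow, abs_of_nonneg hh]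
        ring

theorem stmt_1_general (l : ℕ) (hl : 2 ≤ l) (g : ℝ → ℝ)
    (hg : ContDiffOn ℝ (l : ℕ∞) g (Set.Icc 0 1))
    (a : ℕ) (ha' : a ≤ l - 1)
    (κ : Fin l → ℝ) (hκ : Function.Injective κ)
    (e w : Fin l → ℝ)
    (he : ∀ i : Fin l, e i = if (i : ℕ) = a then (a.factorial : ℝ) else 0)
    (hw : w = (Matrix.of fun i j : Fin l => κ j ^ (i : ℕ))⁻¹.mulVec e)
    (M : ℝ)
    (hM : ∀ x ∈ Set.Icc (0 : ℝ) 1, |iteratedDerivWithin l g (Set.Icc 0 1) x| ≤ M)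
    (x : ℝ) (hx : x ∈ Set.Icc (0 : ℝ) 1) (h : ℝ) (hh : 0 < h)
    (hxk : ∀ j, x + κ j * h ∈ Set.Ioo (0 : ℝ) 1) :
    |(∑ j, w j * g (x + κ j * h)) / h ^ a
        - iteratedDerivWithin a g (Set.Icc 0 1) x|
      ≤ h ^ (l - a) * M * ∑ j, |w j * κ j ^ l| := by
  obtain ⟨n, rfl⟩ : ∃ n, l = n + 1 := ⟨l - 1, by omega⟩
  have han : a ≤ n := by omega
  have hmom : ∀ k ≤ n, ∑ j, w j * κ j ^ k = if k = a then (a ! : ℝ) else 0 := fun k hk ↦ by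
    simpa [he] using sum_mul_pow_eq_of_eq_vandermonde_inv_mulVec hκ hw ⟨k, by omega⟩
  have hbound := abs_sum_mul_sub_pow_mul_iteratedDerivWithin_le (convex_Icc 0 1)
    (uniqueDiffOn_Icc zero_lt_one) (by exact_mod_cast hg) hM hx hh.le
    (fun j ↦ Ioo_subset_Icc_self (hxk j)) han hmom
  have hM0 : 0 ≤ M := (abs_nonneg _).trans (hM x hx)
  have hha : 0 < h ^ a := pow_pos hh a
  calc _ = |∑ j, w j * g (x + κ j * h) - h ^ a * iteratedDerivWithin a g (Icc 0 1) x| / h ^ a := by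
        rw [div_sub' hha.ne', abs_div, abs_of_pos hha]
    _ ≤ h ^ (n + 1) * M / n ! * (∑ j, |w j * κ j ^ (n + 1)|) / h ^ a := by gcongr
    _ ≤ h ^ (n + 1) * M * (∑ j, |w j * κ j ^ (n + 1)|) / h ^ a := by
        gcongr ?_ * _ / _
        exact div_le_self (by positivity) (mod_cast n.factorial_pos)
    _ = h ^ (n + 1 - a) * M * ∑ j, |w j * κ j ^ (n + 1)| := by
        rw [div_eq_iff hha.ne', ← pow_sub_mul_pow h (by omega : a ≤ n + 1)]
        ring

/-- Lemma on numerical differentiation: for `g ∈ C^l([0,1])`, `l ≥ 2`, `a ∈ {1,…,l-1}`,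
distinct nodes `κ ∈ ℝ^l`, and weights `w = A_κ⁻¹ e^{(a)}` (where `e^{(a)}` has `a!` in
position `a+1` and zeros elsewhere), if `x ∈ [0,1]`, `h > 0` and `x + κ_j h ∈ (0,1)` for
all `j`, then `|h^{-a} ∑_j w_j g(x + κ_j h) - g^{(a)}(x)| ≤ h^{l-a} ‖g^{(l)}‖_∞ ∑_j |w_j κ_j^l|`. -/
theorem stmt_1 (l : ℕ) (hl : 2 ≤ l) (g : ℝ → ℝ)
    (hg : ContDiffOn ℝ (l : ℕ∞) g (Set.Icc 0 1))
    (a : ℕ) (ha : 1 ≤ a) (ha' : a ≤ l - 1)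
    (κ : Fin l → ℝ) (hκ : Function.Injective κ)
    (e w : Fin l → ℝ)
    (he : ∀ i : Fin l, e i = if (i : ℕ) = a then (a.factorial : ℝ) else 0)
    (hw : w = (Matrix.of fun i j : Fin l => κ j ^ (i : ℕ))⁻¹.mulVec e)
    (M : ℝ)
    (hM : ∀ x ∈ Set.Icc (0 : ℝ) 1, |iteratedDerivWithin l g (Set.Icc 0 1) x| ≤ M)
    (x : ℝ) (hx : x ∈ Set.Icc (0 : ℝ) 1) (h : ℝ) (hh : 0 < h)
    (hxk : ∀ j, x + κ j * h ∈ Set.Ioo (0 : ℝ) 1) :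
    |(∑ j, w j * g (x + κ j * h)) / h ^ a
        - iteratedDerivWithin a g (Set.Icc 0 1) x|
      ≤ h ^ (l - a) * M * ∑ j, |w j * κ j ^ l| :=
  stmt_1_general l hl g hg a ha' κ hκ e w he hw M hM x hx h hh hxk
end

section
/- Let $r\geq 1$, let $(\lambda_j)_{j=1}^r$ be the sequence $1,-1,3,-3,\dots$ and let $\gamma^{(r)}$ be the unique coefficients with $\sum_j\gamma_j^{(r)}\lambda_j^i=\mathbf{1}\{i=0\}$ for $0\leq i\leq r-1$. Then for any $\bar{f}\in\mathcal{C}^r(\mathbb{R}^s)$ with $\|\bar f\|_r=\max_{|\alpha|=r}\sup_x|D^\alpha\bar f(x)|<\infty$, any $c\in\mathbb{R}^s$ and any $u\in\mathbb{R}^s$, $\left|\sum_{j=1}^r\gamma_j^{(r)}\bar f(c+\lambda_j u)-\bar f(c)\right|\leq \|\bar f\|_r\left(\sum_{j=1}^r|\gamma_j^{(r)}||\lambda_j|^r\right)\sum_{|\alpha|=r}\frac{|u^\alpha|}{\alpha!}$. -/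
/-!
Restrict `f` to the line `φ t = f (c + t • u)`. By Taylor's theorem with Lagrange remainder,
`φ λ_j` is the value at `λ_j` of the degree-`(r-1)` Taylor polynomial of `φ` at `0`, up to an
error bounded by `sup |φ^{(r)}| |λ_j|^r / r!`. The moment conditions on `γ` make the
`γ`-combination of the Taylor polynomials collapse to their constant term `f c`, so only the
remainders survive. Expanding `u` in the standard basis bounds `φ^{(r)}` by
`M ∑_{m : Fin r → Fin s} ∏_p |u_{m p}|`.
-/

open Finset

theorem iteratedDeriv_comp_add_smul {E F : Type*} [NormedAddCommGroup E] [NormedSpace ℝ E]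
    [NormedAddCommGroup F] [NormedSpace ℝ F] {n : ℕ} {f : E → F} (hf : ContDiff ℝ n f)
    (c u : E) (t : ℝ) :
    iteratedDeriv n (fun t : ℝ => f (c + t • u)) t =
      iteratedFDeriv ℝ n f (c + t • u) (fun _ => u) := by
  have hline : (fun t : ℝ => f (c + t • u)) =
      (fun y => f (c + y)) ∘ ContinuousLinearMap.toSpanSingleton ℝ u := rfl
  have hshift : ContDiff ℝ n (fun y => f (c + y)) := hf.comp (contDiff_const.add contDiff_id)
  rw [iteratedDeriv_eq_iteratedFDeriv, hline,
    ContinuousLinearMap.iteratedFDeriv_comp_right _ hshift t le_rfl]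
  simp [iteratedFDeriv_comp_add_left]

theorem abs_sub_sum_taylor_le {g : ℝ → ℝ} {n : ℕ} (hg : ContDiff ℝ (n + 1) g) {K : ℝ}
    (hK : ∀ t, |iteratedDeriv (n + 1) g t| ≤ K) (x : ℝ) :
    |g x - ∑ i ∈ range (n + 1), iteratedDeriv i g 0 * x ^ i / i.factorial|
      ≤ K * |x| ^ (n + 1) / (n + 1).factorial := by
  rcases eq_or_ne x 0 with rfl | hx
  · simp [sum_range_succ', zero_pow]
  obtain ⟨x', -, hx'⟩ := taylor_mean_remainder_lagrange_iteratedDeriv hx.symm hg.contDiffOn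
  have htaylor : taylorWithinEval g n (Set.uIcc 0 x) 0 x
      = ∑ i ∈ range (n + 1), iteratedDeriv i g 0 * x ^ i / i.factorial := by
    rw [taylor_within_apply]
    refine sum_congr rfl fun i hi => ?_
    rw [iteratedDerivWithin_eq_iteratedDeriv (uniqueDiffOn_uIcc hx.symm)
      (hg.contDiffAt.of_le (by exact_mod_cast (mem_range.mp hi).le)) Set.left_mem_uIcc]
    simp only [sub_zero, smul_eq_mul]
    ring
  rw [← htaylor, hx', sub_zero, abs_div, abs_mul, abs_pow, Nat.abs_cast]
  gcongr
  exact hK x'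

theorem ContinuousMultilinearMap.abs_apply_le_of_abs_apply_single_le {ι κ : Type*}
    [Fintype ι] [DecidableEq ι] [Fintype κ] [DecidableEq κ]
    (A : ContinuousMultilinearMap ℝ (fun _ : ι => κ → ℝ) ℝ) {M : ℝ}
    (hA : ∀ m : ι → κ, |A (fun p => Pi.single (m p) 1)| ≤ M) (v : ι → κ → ℝ) :
    |A v| ≤ M * ∑ m : ι → κ, ∏ p, |v p (m p)| := by
  calc |A v| = |∑ m : ι → κ, A (fun p => v p (m p) • Pi.single (m p) 1)| := by
        conv_lhs => rw [show v = fun p => ∑ i, v p i • Pi.single i 1 from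
          funext fun p => pi_eq_sum_univ' (v p)]
        rw [A.map_sum]
    _ ≤ ∑ m : ι → κ, (∏ p, |v p (m p)|) * M := by
        refine (abs_sum_le_sum_abs _ _).trans (sum_le_sum fun m _ => ?_)
        rw [A.map_smul_univ, smul_eq_mul, abs_mul, abs_prod]
        exact mul_le_mul_of_nonneg_left (hA m) (by positivity)
    _ = M * ∑ m : ι → κ, ∏ p, |v p (m p)| := by
        rw [mul_sum]; exact sum_congr rfl fun m _ => mul_comm _ _

theorem sum_mul_sum_range_mul_pow_eq {ι : Type*} [Fintype ι] {r : ℕ} (hr : 1 ≤ r)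
    {γ lam : ι → ℝ} (hγ : ∀ i < r, ∑ j, γ j * lam j ^ i = if i = 0 then 1 else 0)
    (a : ℕ → ℝ) :
    ∑ j, γ j * ∑ i ∈ range r, a i * lam j ^ i = a 0 := by
  calc ∑ j, γ j * ∑ i ∈ range r, a i * lam j ^ i
      = ∑ i ∈ range r, a i * ∑ j, γ j * lam j ^ i := by
        simp only [mul_sum]
        rw [sum_comm]
        exact sum_congr rfl fun i _ => sum_congr rfl fun j _ => by ring
    _ = ∑ i ∈ range r, if i = 0 then a 0 else 0 :=
        sum_congr rfl fun i hi => by rw [hγ i (mem_range.mp hi)]; split_ifs <;> simp_all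
    _ = a 0 := by rw [sum_ite_eq', if_pos (mem_range.mpr hr)]

theorem abs_sum_mul_comp_sub_le_of_moments {φ : ℝ → ℝ} {r : ℕ} (hr : 1 ≤ r)
    (hφ : ContDiff ℝ r φ) {K : ℝ} (hK : ∀ t, |iteratedDeriv r φ t| ≤ K)
    {ι : Type*} [Fintype ι] {γ lam : ι → ℝ}
    (hγ : ∀ i < r, ∑ j, γ j * lam j ^ i = if i = 0 then 1 else 0) :
    |∑ j, γ j * φ (lam j) - φ 0| ≤ K * (∑ j, |γ j| * |lam j| ^ r) / r.factorial := by
  obtain ⟨n, rfl⟩ : ∃ n, r = n + 1 := ⟨r - 1, by omega⟩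
  set P : ℝ → ℝ := fun x => ∑ i ∈ range (n + 1), iteratedDeriv i φ 0 / i.factorial * x ^ i
  have hP : ∑ j, γ j * P (lam j) = φ 0 := by
    simpa using sum_mul_sum_range_mul_pow_eq hr hγ (fun i => iteratedDeriv i φ 0 / i.factorial)
  have hrem : ∀ x, |φ x - P x| ≤ K * |x| ^ (n + 1) / (n + 1).factorial := fun x => by
    simpa only [P, div_mul_eq_mul_div] using abs_sub_sum_taylor_le (by exact_mod_cast hφ) hK x
  calc |∑ j, γ j * φ (lam j) - φ 0|
      = |∑ j, γ j * (φ (lam j) - P (lam j))| := by simp only [mul_sub, sum_sub_distrib, hP]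
    _ ≤ ∑ j, |γ j| * (K * |lam j| ^ (n + 1) / (n + 1).factorial) :=
        (abs_sum_le_sum_abs _ _).trans (sum_le_sum fun j _ => by
          rw [abs_mul]; exact mul_le_mul_of_nonneg_left (hrem _) (abs_nonneg _))
    _ = K * (∑ j, |γ j| * |lam j| ^ (n + 1)) / (n + 1).factorial := by
        rw [mul_sum, sum_div]; exact sum_congr rfl fun j _ => by ring

-- `∑_{|α|=r} |u^α|/α!` is encoded as `(∑_{m : Fin r → Fin s} ∏_p |u_{m p}|) / r!`: exactly
-- `r!/α!` maps `m` take each value `i` exactly `α_i` times.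
theorem stmt_9_general (s r : ℕ) (hr : 1 ≤ r)
    (lam : Fin r → ℝ)
    (γ : Fin r → ℝ)
    (hγ : ∀ i : ℕ, i < r → ∑ j, γ j * lam j ^ i = if i = 0 then 1 else 0)
    (f : (Fin s → ℝ) → ℝ) (hf : ContDiff ℝ (r : ℕ∞) f)
    (M : ℝ)
    (hM : ∀ (x : Fin s → ℝ) (m : Fin r → Fin s),
      |iteratedFDeriv ℝ r f x (fun p => Pi.single (m p) 1)| ≤ M)
    (c u : Fin s → ℝ) :
    |(∑ j, γ j * f (c + lam j • u)) - f c|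
      ≤ M * (∑ j, |γ j| * |lam j| ^ r) *
        ((∑ m : Fin r → Fin s, ∏ p, |u (m p)|) / (r.factorial : ℝ)) := by
  have hderiv (t : ℝ) : |iteratedDeriv r (fun t => f (c + t • u)) t|
      ≤ M * ∑ m : Fin r → Fin s, ∏ p, |u (m p)| := by
    rw [iteratedDeriv_comp_add_smul hf]
    exact (iteratedFDeriv ℝ r f _).abs_apply_le_of_abs_apply_single_le (hM _) _
  have hline : ContDiff ℝ r (fun t : ℝ => f (c + t • u)) := by
    exact_mod_cast hf.comp (contDiff_const.add (contDiff_id.smul contDiff_const))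
  calc |(∑ j, γ j * f (c + lam j • u)) - f c|
      ≤ M * (∑ m : Fin r → Fin s, ∏ p, |u (m p)|) * (∑ j, |γ j| * |lam j| ^ r)
          / r.factorial := by
        simpa using abs_sum_mul_comp_sub_le_of_moments hr hline hderiv hγ
    _ = _ := by ring

/-- Let `(λ_j)_{j=1}^r` be the sequence `1, -1, 3, -3, …` and let `γ^{(r)}` be the unique
coefficients with `∑_j γ_j λ_j^i = 𝟙{i=0}` for `0 ≤ i ≤ r-1`. For `f̄ ∈ C^r(ℝ^s)` with all
`r`-th order partial derivatives bounded by `M`, any `c, u ∈ ℝ^s`: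
`|∑_j γ_j f̄(c + λ_j u) - f̄(c)| ≤ M (∑_j |γ_j| |λ_j|^r) ∑_{|α|=r} |u^α|/α!`, where the
multi-index sum `∑_{|α|=r} |u^α|/α!` is written as `(∑_{m : Fin r → Fin s} ∏_p |u_{m(p)}|)/r!`. -/
theorem stmt_9 (s r : ℕ) (hs : 1 ≤ s) (hr : 1 ≤ r)
    (lam : Fin r → ℝ)
    (hlam : ∀ j : Fin r, lam j = (-1 : ℝ) ^ (j : ℕ) * (2 * (((j : ℕ) / 2 : ℕ) : ℝ) + 1))
    (γ : Fin r → ℝ)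
    (hγ : ∀ i : ℕ, i < r → ∑ j, γ j * lam j ^ i = if i = 0 then 1 else 0)
    (f : (Fin s → ℝ) → ℝ) (hf : ContDiff ℝ (r : ℕ∞) f)
    (M : ℝ)
    (hM : ∀ (x : Fin s → ℝ) (m : Fin r → Fin s),
      |iteratedFDeriv ℝ r f x (fun p => Pi.single (m p) 1)| ≤ M)
    (c u : Fin s → ℝ) :
    |(∑ j, γ j * f (c + lam j • u)) - f c|
      ≤ M * (∑ j, |γ j| * |lam j| ^ r) *
        ((∑ m : Fin r → Fin s, ∏ p, |u (m p)|) / (r.factorial : ℝ)) :=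
  stmt_9_general s r hr lam γ hγ f hf M hM c u
end

section
/- Let $g\in L_1([0,1]^s)$, let $\lambda$ be an odd integer (possibly negative), let $k\geq 2$, $m\geq(|\lambda|-1)/2$ an integer, and extend $g$ to $\bar g:\mathbb{R}^s\to\mathbb{R}$ by zero outside $[0,1]^s$. With $\mathfrak{C}_{m,k}$ the set of centres $\left(\frac{2j_1+1}{2k},\dots,\frac{2j_s+1}{2k}\right)$, $(j_1,\dots,j_s)\in\{-m,\dots,k+m-1\}^s$, and independent $U_c\sim\mathcal{U}([-1/(2k),1/(2k)]^s)$, we have $\mathbb{E}\left[k^{-s}\sum_{c\in\mathfrak{C}_{m,k}}\bar g(c+\lambda U_c)\right]=\int_{[0,1]^s}g(u)\,du$. -/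
/-
Write `L = |λ|`. Since `λ U_c` is uniform on the cube of side `L/k`, the scaling and translation
invariance of Lebesgue measure give `E[ḡ(c + λ U_c)] = (k/L)^s ∫_{B_c} ḡ` with `B_c` the closed
sup-norm ball of radius `L/(2k)` around `c`. Summing over the centres, `k^{-s} ∑_c` of these equals
`L^{-s} ∫ ∑_c 1_{B_c} ḡ`. In each coordinate, a point `y ∈ [0,1]` with `2ky ∉ ℤ` lies within
`L/(2k)` of exactly `L` of the centres `(2j+1)/(2k)`, `-m ≤ j ≤ k+m-1`, because `m ≥ (L-1)/2`;
so off a null set `∑_c 1_{B_c} = L^s` on `[0,1]^s`, where `ḡ` lives, and the expectation is `∫ g`.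
-/

open MeasureTheory ProbabilityTheory Finset Metric

variable {ι : Type*} [Fintype ι]

theorem MeasureTheory.Measure.pi_cond_eq_smul_restrict {α : Type*} [MeasurableSpace α] (ν : Measure α)
    [SigmaFinite ν] {s : Set α} (hs : MeasurableSet s) :
    Measure.pi (fun _ : ι => ν[|s]) =
      (ν s ^ Fintype.card ι)⁻¹ • (Measure.pi fun _ => ν).restrict (Set.univ.pi fun _ => s) := by
  rw [Measure.restrict_pi_pi]
  refine Measure.pi_eq fun t ht => ?_
  simp only [Measure.smul_apply, Measure.pi_pi, cond_apply hs, smul_eq_mul, prod_mul_distrib,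
    prod_const, ENNReal.inv_pow, card_univ, Measure.restrict_apply (ht _), Set.inter_comm]

theorem pi_cond_Icc_neg_eq {a : ℝ} (ha : 0 < a) :
    Measure.pi (fun _ : ι => volume[|Set.Icc (-a) a]) =
      ENNReal.ofReal ((2 * a) ^ Fintype.card ι)⁻¹ • volume.restrict (closedBall (0 : ι → ℝ) a) := by
  rw [Measure.pi_cond_eq_smul_restrict _ measurableSet_Icc, ← volume_pi, closedBall_pi _ ha.le,
    Real.volume_Icc, ← ENNReal.ofReal_pow (by linarith),
    ← ENNReal.ofReal_inv_of_pos (pow_pos (by linarith) _)]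
  simp only [Pi.zero_apply, Real.closedBall_eq_Icc, zero_sub, zero_add]
  ring_nf

theorem setIntegral_closedBall_comp_add_smul {E F : Type*} [NormedAddCommGroup E]
    [NormedSpace ℝ E] [MeasurableSpace E] [BorelSpace E] [FiniteDimensional ℝ E]
    [NormedAddCommGroup F] [NormedSpace ℝ F] (μ : Measure E) [μ.IsAddHaarMeasure] (f : E → F)
    (c : E) {r a : ℝ} (hr : r ≠ 0) (ha : 0 ≤ a) :
    ∫ x in closedBall 0 a, f (c + r • x) ∂μ =
      (|r| ^ Module.finrank ℝ E)⁻¹ • ∫ z in closedBall c (|r| * a), f z ∂μ := by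
  rw [Measure.setIntegral_comp_smul μ (fun y => f (c + y)) _ hr, smul_closedBall r 0 ha, smul_zero,
    Real.norm_eq_abs, abs_inv, abs_pow,
    ← (measurePreserving_add_left μ c).setIntegral_preimage_emb (measurableEmbedding_addLeft c) f,
    preimage_add_closedBall, sub_self]

section UniformLaw

variable {F Ω : Type*} [NormedAddCommGroup F] [MeasurableSpace Ω] {μ : Measure Ω} {V : Ω → ι → ℝ}
  {a : ℝ}

theorem integrable_map_comp_add_smul_of_map_eq_pi_cond (ha : 0 < a)
    (hlaw : μ.map V = Measure.pi fun _ => volume[|Set.Icc (-a) a])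
    {f : (ι → ℝ) → F} (hf : Integrable f) (c : ι → ℝ) {r : ℝ} (hr : r ≠ 0) :
    Integrable (fun x => f (c + r • x)) (μ.map V) := by
  rw [hlaw, pi_cond_Icc_neg_eq ha]
  exact (((hf.comp_add_left c).comp_smul hr).restrict).smul_measure ENNReal.ofReal_ne_top

theorem integrable_comp_add_smul_of_map_eq_pi_cond (hV : AEMeasurable V μ) (ha : 0 < a)
    (hlaw : μ.map V = Measure.pi fun _ => volume[|Set.Icc (-a) a])
    {f : (ι → ℝ) → F} (hf : Integrable f) (c : ι → ℝ) {r : ℝ} (hr : r ≠ 0) :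
    Integrable (fun ω => f (c + r • V ω)) μ :=
  have h := integrable_map_comp_add_smul_of_map_eq_pi_cond ha hlaw hf c hr
  (integrable_map_measure h.aestronglyMeasurable hV).1 h

theorem integral_comp_add_smul_of_map_eq_pi_cond [NormedSpace ℝ F] (hV : AEMeasurable V μ)
    (ha : 0 < a) (hlaw : μ.map V = Measure.pi fun _ => volume[|Set.Icc (-a) a])
    {f : (ι → ℝ) → F} (hf : Integrable f) (c : ι → ℝ) {r : ℝ} (hr : r ≠ 0) :
    ∫ ω, f (c + r • V ω) ∂μ =
      ((2 * a * |r|) ^ Fintype.card ι)⁻¹ • ∫ z in closedBall c (|r| * a), f z := by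
  have h := integrable_map_comp_add_smul_of_map_eq_pi_cond ha hlaw hf c hr
  rw [← integral_map hV h.aestronglyMeasurable, hlaw, pi_cond_Icc_neg_eq ha, integral_smul_measure,
    setIntegral_closedBall_comp_add_smul volume f c hr ha.le, Module.finrank_fintype_fun_eq_card,
    ENNReal.toReal_ofReal (by positivity), smul_smul, ← mul_inv, ← mul_pow]

end UniformLaw

theorem Int.card_Icc_ceil_floor_add_natCast {b : ℝ} (hb : b ∉ Set.range Int.cast) (L : ℕ) :
    #(Icc ⌈b⌉ ⌊b + L⌋) = L := by
  rw [Int.card_Icc, Int.floor_add_natCast, (Int.ceil_eq_floor_add_one_iff_notMem b).2 hb]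
  omega

theorem card_filter_abs_sub_two_mul_add_one_le {k m L : ℕ} (hL : L ≤ 2 * m + 1) {x : ℝ}
    (hx₀ : 0 ≤ x) (hxk : x ≤ 2 * k) (hx : x ∉ Set.range Int.cast) :
    #{t ∈ Icc (-(m : ℤ)) ((k : ℤ) + m - 1) | |x - (2 * ((t : ℤ) : ℝ) + 1)| ≤ L} = L := by
  obtain ⟨b, hbx⟩ : ∃ b : ℝ, x = 2 * b + 1 + L := ⟨(x - 1 - L) / 2, by ring⟩
  have hint (n : ℤ) : b ≠ n := fun h => hx ⟨2 * n + 1 + L, by push_cast; rw [hbx, h]⟩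
  have hLm : (L : ℝ) ≤ 2 * m + 1 := by exact_mod_cast hL
  refine .trans (congrArg card ?_) (Int.card_Icc_ceil_floor_add_natCast
    (fun ⟨n, hn⟩ => hint n hn.symm) L)
  ext t
  simp only [mem_filter, mem_Icc, Int.ceil_le, Int.le_floor, abs_le]
  constructor
  · rintro ⟨-, h₁, h₂⟩
    constructor <;> linarith
  · rintro ⟨h₁, h₂⟩
    have hlow : ((-(m : ℤ) - 1 : ℤ) : ℝ) < t := by
      push_cast; linarith [lt_of_le_of_ne h₁ (hint t)]
    have hhigh : (t : ℝ) < ((k + m : ℤ) : ℝ) := by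
      push_cast; linarith [lt_of_le_of_ne h₂ fun h => hint (t - L) (by push_cast; linarith)]
    refine ⟨⟨?_, ?_⟩, by linarith, by linarith⟩
    · have := Int.cast_lt.1 hlow; omega
    · have := Int.cast_lt.1 hhigh; omega

theorem ae_forall_mul_apply_notMem_range_intCast {a : ℝ} (ha : a ≠ 0) :
    ∀ᵐ z : ι → ℝ, ∀ i, a * z i ∉ Set.range Int.cast := by
  refine ae_all_iff.2 fun i => ?_
  have : ∀ᵐ z : ι → ℝ, ∀ n : ℤ, z i ≠ n / a := ae_all_iff.2 fun n => by
    simpa only [volume_pi] using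
      Measure.ae_eval_ne (fun _ : ι => (volume : Measure ℝ)) i ((n : ℝ) / a)
  filter_upwards [this] with z hz ⟨n, hn⟩
  exact hz n (by rw [hn]; field_simp)

noncomputable def gridCentre (k : ℕ) (j : ι → ℤ) : ι → ℝ := fun i => (2 * j i + 1) / (2 * k)

theorem mem_closedBall_gridCentre_iff {k : ℕ} (hk : 0 < k) (j : ι → ℤ) {r : ℝ} (hr : 0 ≤ r)
    (z : ι → ℝ) :
    z ∈ closedBall (gridCentre k j) (r / (2 * k)) ↔ ∀ i, |2 * k * z i - (2 * j i + 1)| ≤ r := by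
  have hk' : (0 : ℝ) < 2 * k := by positivity
  rw [mem_closedBall, dist_pi_le_iff (by positivity)]
  refine forall_congr' fun i => ?_
  rw [Real.dist_eq, gridCentre, le_div_iff₀ hk', ← abs_of_pos hk', ← abs_mul, abs_of_pos hk',
    sub_mul, div_mul_cancel₀ _ hk'.ne', mul_comm]

section Grid

variable [DecidableEq ι]

variable (ι) in
/-- Indices `j` of the centres `𝔠_{m,k}`: the grid of `[0,1]^s` extended by `m` cubes on each
side. -/
noncomputable def extendedGrid (k m : ℕ) : Finset (ι → ℤ) :=
  Fintype.piFinset fun _ => Icc (-(m : ℤ)) ((k : ℤ) + m - 1)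

open Classical in
theorem card_filter_mem_closedBall_gridCentre {k m L : ℕ} (hk : 0 < k) (hL : L ≤ 2 * m + 1)
    {z : ι → ℝ} (hz : z ∈ Set.Icc 0 1) (hzZ : ∀ i, 2 * k * z i ∉ Set.range Int.cast) :
    #{j ∈ extendedGrid ι k m | z ∈ closedBall (gridCentre k j) (L / (2 * k))} =
      L ^ Fintype.card ι := by
  calc
    _ = #(Fintype.piFinset fun i => {t ∈ Icc (-(m : ℤ)) ((k : ℤ) + m - 1) |
          |2 * k * z i - (2 * ((t : ℤ) : ℝ) + 1)| ≤ L}) := by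
      congr 1
      ext j
      simp [extendedGrid, mem_closedBall_gridCentre_iff hk _ L.cast_nonneg, forall_and]
    _ = L ^ Fintype.card ι := by
      rw [Fintype.card_piFinset, ← Finset.card_univ, ← prod_const]
      have h2k : (0 : ℝ) ≤ 2 * k := by positivity
      refine prod_congr rfl fun i _ => card_filter_abs_sub_two_mul_add_one_le hL ?_ ?_ (hzZ i)
      · exact mul_nonneg h2k (hz.1 i)
      · exact mul_le_of_le_one_right h2k (hz.2 i)

theorem sum_indicator_closedBall_gridCentre_ae_eq {k m L : ℕ} (hk : 0 < k) (hL : L ≤ 2 * m + 1)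
    {f : (ι → ℝ) → ℝ} (hf : ∀ z ∉ Set.Icc 0 1, f z = 0) :
    (fun z => ∑ j ∈ extendedGrid ι k m, (closedBall (gridCentre k j) (L / (2 * k))).indicator f z)
      =ᵐ[volume] fun z => L ^ Fintype.card ι * f z := by
  classical
  filter_upwards [ae_forall_mul_apply_notMem_range_intCast (ι := ι) (a := 2 * k) (by positivity)]
    with z hzZ
  by_cases hz : z ∈ Set.Icc 0 1
  · simp only [Set.indicator_apply]
    rw [← sum_filter, sum_const, card_filter_mem_closedBall_gridCentre hk hL hz hzZ, nsmul_eq_mul,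
      Nat.cast_pow]
  · rw [hf z hz, mul_zero]
    exact sum_eq_zero fun j _ => by simp [Set.indicator_apply, hf z hz]

theorem sum_setIntegral_closedBall_gridCentre {k m L : ℕ} (hk : 0 < k) (hL : L ≤ 2 * m + 1)
    {f : (ι → ℝ) → ℝ} (hf : Integrable f) (hf₀ : ∀ z ∉ Set.Icc 0 1, f z = 0) :
    ∑ j ∈ extendedGrid ι k m, ∫ z in closedBall (gridCentre k j) (L / (2 * k)), f z =
      L ^ Fintype.card ι * ∫ z, f z := by
  simp_rw [← integral_indicator measurableSet_closedBall]
  rw [← integral_finsetSum _ fun j _ => hf.indicator measurableSet_closedBall,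
    integral_congr_ae (sum_indicator_closedBall_gridCentre_ae_eq hk hL hf₀), integral_const_mul]

end Grid

theorem stmt_10_general (s : ℕ) (k m : ℕ) (hk : 2 ≤ k)
    (lam : ℤ) (hlam : Odd lam) (hm : lam.natAbs ≤ 2 * m + 1)
    {Ω : Type} [MeasurableSpace Ω] (μ : Measure Ω)
    (U : (Fin s → ℤ) → Ω → (Fin s → ℝ))
    (hmeas : ∀ j, Measurable (U j))
    (hlaw : ∀ j, Measure.map (U j) μ = Measure.pi fun _ : Fin s =>
      (volume (Set.Icc (-(1 / (2 * (k : ℝ)))) (1 / (2 * (k : ℝ)))))⁻¹ •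
        volume.restrict (Set.Icc (-(1 / (2 * (k : ℝ)))) (1 / (2 * (k : ℝ)))))
    (g gbar : (Fin s → ℝ) → ℝ)
    (hg : IntegrableOn g (Set.Icc 0 1) volume)
    (hgbar : ∀ u ∈ Set.Icc (0 : Fin s → ℝ) 1, gbar u = g u)
    (hgbar0 : ∀ u ∉ Set.Icc (0 : Fin s → ℝ) 1, gbar u = 0) :
    ∫ ω, ((k : ℝ) ^ s)⁻¹ *
        ∑ j ∈ Fintype.piFinset (fun _ : Fin s => Finset.Icc (-(m : ℤ)) ((k : ℤ) + m - 1)),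
          gbar (fun i => (2 * ((j i : ℤ) : ℝ) + 1) / (2 * (k : ℝ)) + (lam : ℝ) * U j ω i) ∂μ
      = ∫ u in Set.Icc (0 : Fin s → ℝ) 1, g u := by
  have hk₀ : 0 < k := by omega
  have hlam₀ : (lam : ℝ) ≠ 0 := Int.cast_ne_zero.2 fun h => by simp [h] at hlam
  have hL : |(lam : ℝ)| = lam.natAbs := by rw [Nat.cast_natAbs, Int.cast_abs]
  have hgbar_eq : gbar = (Set.Icc 0 1).indicator g := funext fun u => by
    by_cases hu : u ∈ Set.Icc (0 : Fin s → ℝ) 1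
    · rw [hgbar u hu, Set.indicator_of_mem hu]
    · rw [hgbar0 u hu, Set.indicator_of_notMem hu]
  have hgbar_int : Integrable gbar := hgbar_eq ▸ (integrable_indicator_iff measurableSet_Icc).2 hg
  have ha : (0 : ℝ) < 1 / (2 * k) := by positivity
  have hU (j : Fin s → ℤ) : μ.map (U j) =
      Measure.pi fun _ => volume[|Set.Icc (-(1 / (2 * (k : ℝ)))) (1 / (2 * k))] := hlaw j
  calc
    _ = ((k : ℝ) ^ s)⁻¹ * ∑ j ∈ extendedGrid (Fin s) k m,
        ∫ ω, gbar (gridCentre k j + (lam : ℝ) • U j ω) ∂μ := by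
      rw [integral_const_mul]
      exact congrArg _ <| integral_finsetSum _ fun j _ =>
        integrable_comp_add_smul_of_map_eq_pi_cond (hmeas j).aemeasurable ha (hU j) hgbar_int _ hlam₀
    _ = ((lam.natAbs : ℝ) ^ s)⁻¹ * ∑ j ∈ extendedGrid (Fin s) k m,
        ∫ z in closedBall (gridCentre k j) (lam.natAbs / (2 * k)), gbar z := by
      simp_rw [integral_comp_add_smul_of_map_eq_pi_cond (hmeas _).aemeasurable ha (hU _) hgbar_int _
        hlam₀, hL, Fintype.card_fin, mul_one_div, smul_eq_mul, ← mul_sum, ← mul_assoc]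
      congr 1
      field_simp
      rw [div_pow, mul_div_cancel₀ _ (by positivity)]
    _ = ∫ u in Set.Icc (0 : Fin s → ℝ) 1, g u := by
      rw [sum_setIntegral_closedBall_gridCentre hk₀ hm hgbar_int hgbar0, Fintype.card_fin,
        ← mul_assoc, inv_mul_cancel₀ (pow_ne_zero _ (hL ▸ abs_ne_zero.2 hlam₀)), one_mul,
        hgbar_eq, integral_indicator measurableSet_Icc]

/-- Unbiasedness over the extended grid (Lemma `expectation`): let `g ∈ L₁([0,1]^s)` be
extended by zero to `ḡ : ℝ^s → ℝ`, let `λ` be an odd integer, `k ≥ 2`,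
`m ≥ (|λ|-1)/2` (equivalently `|λ| ≤ 2m+1`), and let `𝔠_{m,k}` be the grid of centres
`((2j_1+1)/(2k),…,(2j_s+1)/(2k))`, `j ∈ {-m,…,k+m-1}^s`, with independent uniforms `U_c`
on `[-1/(2k),1/(2k)]^s`. Then `E[k^{-s} ∑_{c} ḡ(c + λ U_c)] = ∫_{[0,1]^s} g(u) du`. -/
theorem stmt_10 (s : ℕ) (hs : 1 ≤ s) (k m : ℕ) (hk : 2 ≤ k)
    (lam : ℤ) (hlam : Odd lam) (hm : lam.natAbs ≤ 2 * m + 1)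
    {Ω : Type} [MeasurableSpace Ω] (μ : Measure Ω) [IsProbabilityMeasure μ]
    (U : (Fin s → ℤ) → Ω → (Fin s → ℝ))
    (hmeas : ∀ j, Measurable (U j))
    (hlaw : ∀ j, Measure.map (U j) μ = Measure.pi fun _ : Fin s =>
      (volume (Set.Icc (-(1 / (2 * (k : ℝ)))) (1 / (2 * (k : ℝ)))))⁻¹ •
        volume.restrict (Set.Icc (-(1 / (2 * (k : ℝ)))) (1 / (2 * (k : ℝ)))))
    (hindep : iIndepFun U μ)
    (g gbar : (Fin s → ℝ) → ℝ) (hgm : Measurable g)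
    (hg : IntegrableOn g (Set.Icc 0 1) volume)
    (hgbar : ∀ u ∈ Set.Icc (0 : Fin s → ℝ) 1, gbar u = g u)
    (hgbar0 : ∀ u ∉ Set.Icc (0 : Fin s → ℝ) 1, gbar u = 0) :
    ∫ ω, ((k : ℝ) ^ s)⁻¹ *
        ∑ j ∈ Fintype.piFinset (fun _ : Fin s => Finset.Icc (-(m : ℤ)) ((k : ℤ) + m - 1)),
          gbar (fun i => (2 * ((j i : ℤ) : ℝ) + 1) / (2 * (k : ℝ)) + (lam : ℝ) * U j ω i) ∂μ
      = ∫ u in Set.Icc (0 : Fin s → ℝ) 1, g u :=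
  stmt_10_general s k m hk lam hlam hm μ U hmeas hlaw g gbar hg hgbar hgbar0
end

section
/- Let $r\geq 1$ and let $g\in\mathcal{C}^r(\mathbb{R})\cap L_1(\mathbb{R})$ satisfy $\lim_{|x|\to\infty}|x|^c\,|g^{(a)}(x)|=0$ for all $c>0$ and all $0\leq a\leq r$. With $\psi_1(u)=\frac{2u-1}{u^\tau(1-u)^\tau}$ for some fixed $\tau>0$, the function $f(u)=g(\psi_1(u))\,\psi_1'(u)$ on $(0,1)$ extends to a function in $\mathcal{C}^r_0([0,1])$ (i.e. $f$ and all its derivatives up to order $r$ extend continuously by $0$ at $u=0$ and $u=1$), and $\int_0^1 f(u)\,du=\int_{\mathbb{R}}g(x)\,dx$. -/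
/-!
On `(0,1)` write `w(u) = u(1-u)`, so that `ψ₁ = (2u-1) w^{-τ}`. By induction every derivative
of `f = (g ∘ ψ₁) ψ₁'` of order `k ≤ r` is a linear combination of terms
`g^{(a)}(ψ₁ u) (2u-1)^m w^{-s}` with `a ≤ k` and `s > 0`. Near either end `|2u-1| ≥ 1/2`, hence
`w^{-s} ≤ (2|ψ₁ u|)^{s/τ}`, and the rapid decay of `g^{(a)}` kills every such term. A function
on an open interval whose derivatives up to order `r` all tend to `0` at both ends extends by zero
to a `C^r` function on `ℝ`. The integral identity is the change of variables `x = ψ₁(u)`,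
`ψ₁` being an increasing bijection of `(0,1)` onto `ℝ`.
-/

open Filter Set Topology MeasureTheory

theorem tendsto_indicator_nhds_zero {X M : Type*} [TopologicalSpace X] [TopologicalSpace M]
    [Zero M] {s : Set X} {f : X → M} {x : X}
    (h : Tendsto f (𝓝[s] x) (𝓝 0)) : Tendsto (s.indicator f) (𝓝 x) (𝓝 0) := by
  rw [← nhdsWithin_univ, ← union_compl_self s, nhdsWithin_union]
  refine tendsto_sup.2 ⟨h.congr' ?_, tendsto_const_nhds.congr' ?_⟩
  · exact eventuallyEq_nhdsWithin_of_eqOn fun y hy => (indicator_of_mem hy f).symm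
  · exact eventuallyEq_nhdsWithin_of_eqOn fun y hy => (indicator_of_notMem hy f).symm

section ExtensionByZero

variable {E : Type*} [NormedAddCommGroup E] {a b x : ℝ} {f f' : ℝ → E}

theorem indicator_Ioo_eventuallyEq (hx : x ∈ Ioo a b) : (Ioo a b).indicator f =ᶠ[𝓝 x] f :=
  eventually_of_mem (isOpen_Ioo.mem_nhds hx) fun _ hy => indicator_of_mem hy f

theorem indicator_Ioo_eventuallyEq_zero (hx : x ∉ Ioo a b) (hxa : x ≠ a) (hxb : x ≠ b) :
    (Ioo a b).indicator f =ᶠ[𝓝 x] 0 := by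
  have hx' : x ∉ Icc a b := fun h => hx (Icc_sdiff_both (a := a) ▸ ⟨h, by simp [hxa, hxb]⟩)
  exact eventually_of_mem (isClosed_Icc.isOpen_compl.mem_nhds hx') fun _ hy =>
    indicator_of_notMem (fun h => hy (Ioo_subset_Icc_self h)) f

theorem continuousAt_indicator_Ioo (hf : ContinuousOn f (Ioo a b))
    (ha : Tendsto f (𝓝[>] a) (𝓝 0)) (hb : Tendsto f (𝓝[<] b) (𝓝 0)) (x : ℝ) :
    ContinuousAt ((Ioo a b).indicator f) x := by
  by_cases hx : x ∈ Ioo a b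
  · exact (hf.continuousAt (isOpen_Ioo.mem_nhds hx)).congr (indicator_Ioo_eventuallyEq hx).symm
  rw [ContinuousAt, indicator_of_notMem hx]
  rcases eq_or_ne x a with rfl | hxa
  · exact tendsto_indicator_nhds_zero (ha.mono_left (nhdsWithin_mono _ Ioo_subset_Ioi_self))
  rcases eq_or_ne x b with rfl | hxb
  · exact tendsto_indicator_nhds_zero (hb.mono_left (nhdsWithin_mono _ Ioo_subset_Iio_self))
  exact tendsto_const_nhds.congr' (indicator_Ioo_eventuallyEq_zero hx hxa hxb).symm

variable [NormedSpace ℝ E]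

theorem hasDerivAt_of_eventually_hasDerivAt {g : ℝ → E}
    (hfg : ∀ᶠ y in 𝓝[≠] x, HasDerivAt f (g y) y) (hf : ContinuousAt f x)
    (hg : ContinuousAt g x) : HasDerivAt f (g x) x := by
  set s := {y | HasDerivAt f (g y) y}
  have hright : HasDerivWithinAt f (g x) (Ici x) x := by
    have hs : s ∩ Ioi x ∈ 𝓝[>] x :=
      inter_mem (nhdsWithin_mono _ (fun y hy => ne_of_gt hy) hfg) self_mem_nhdsWithin
    refine hasDerivWithinAt_Ici_of_tendsto_deriv
      (fun y hy => hy.1.differentiableAt.differentiableWithinAt) hf.continuousWithinAt hs ?_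
    exact (hg.tendsto.mono_left nhdsWithin_le_nhds).congr'
      (mem_of_superset hs fun y hy => hy.1.deriv.symm)
  have hleft : HasDerivWithinAt f (g x) (Iic x) x := by
    have hs : s ∩ Iio x ∈ 𝓝[<] x :=
      inter_mem (nhdsWithin_mono _ (fun y hy => ne_of_lt hy) hfg) self_mem_nhdsWithin
    refine hasDerivWithinAt_Iic_of_tendsto_deriv
      (fun y hy => hy.1.differentiableAt.differentiableWithinAt) hf.continuousWithinAt hs ?_
    exact (hg.tendsto.mono_left nhdsWithin_le_nhds).congr'
      (mem_of_superset hs fun y hy => hy.1.deriv.symm)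
  simpa using hleft.union hright

theorem hasDerivAt_indicator_Ioo (hf : ∀ x ∈ Ioo a b, HasDerivAt f (f' x) x)
    (hf' : ContinuousOn f' (Ioo a b))
    (ha : Tendsto f (𝓝[>] a) (𝓝 0)) (hb : Tendsto f (𝓝[<] b) (𝓝 0))
    (ha' : Tendsto f' (𝓝[>] a) (𝓝 0)) (hb' : Tendsto f' (𝓝[<] b) (𝓝 0)) (x : ℝ) :
    HasDerivAt ((Ioo a b).indicator f) ((Ioo a b).indicator f' x) x := by
  have hcont : ContinuousOn f (Ioo a b) := fun y hy => (hf y hy).continuousAt.continuousWithinAt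
  refine hasDerivAt_of_eventually_hasDerivAt ?_ (continuousAt_indicator_Ioo hcont ha hb x)
    (continuousAt_indicator_Ioo hf' ha' hb' x)
  filter_upwards [nhdsNE_le_cofinite x (toFinite {a, b}).compl_mem_cofinite] with y hy
  simp only [mem_compl_iff, mem_insert_iff, mem_singleton_iff, not_or] at hy
  by_cases hyab : y ∈ Ioo a b
  · rw [indicator_of_mem hyab]
    exact (hf y hyab).congr_of_eventuallyEq (indicator_Ioo_eventuallyEq hyab)
  · rw [indicator_of_notMem hyab]
    exact (hasDerivAt_const y 0).congr_of_eventuallyEq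
      (indicator_Ioo_eventuallyEq_zero hyab hy.1 hy.2)

theorem contDiff_indicator_Ioo {n : ℕ} (hf : ContDiffOn ℝ n f (Ioo a b))
    (ha : ∀ k ≤ n, Tendsto (iteratedDeriv k f) (𝓝[>] a) (𝓝 0))
    (hb : ∀ k ≤ n, Tendsto (iteratedDeriv k f) (𝓝[<] b) (𝓝 0)) :
    ContDiff ℝ n ((Ioo a b).indicator f) ∧
      ∀ k ≤ n,
        iteratedDeriv k ((Ioo a b).indicator f) = (Ioo a b).indicator (iteratedDeriv k f) := by
  induction n generalizing f with
  | zero =>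
    simp only [Nat.le_zero, forall_eq, iteratedDeriv_zero, CharP.cast_eq_zero,
      contDiff_zero, and_true] at ha hb ⊢
    exact continuous_iff_continuousAt.2 (continuousAt_indicator_Ioo hf.continuousOn ha hb)
  | succ n ih =>
    have hf' : ContDiffOn ℝ n (deriv f) (Ioo a b) := hf.deriv_of_isOpen isOpen_Ioo (by simp)
    obtain ⟨hC, hD⟩ := ih hf' (fun k hk => iteratedDeriv_succ' (f := f) ▸ ha (k + 1) (by omega))
      (fun k hk => iteratedDeriv_succ' (f := f) ▸ hb (k + 1) (by omega))
    have hhas (x : ℝ) : HasDerivAt ((Ioo a b).indicator f) ((Ioo a b).indicator (deriv f) x) x := by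
      refine hasDerivAt_indicator_Ioo (fun x hx => ?_) hf'.continuousOn ?_ ?_ ?_ ?_ x
      · exact ((hf.differentiableOn (by simp)).differentiableAt
          (isOpen_Ioo.mem_nhds hx)).hasDerivAt
      · simpa using ha 0 (by omega)
      · simpa using hb 0 (by omega)
      · simpa using ha 1 (by omega)
      · simpa using hb 1 (by omega)
    have hderiv : deriv ((Ioo a b).indicator f) = (Ioo a b).indicator (deriv f) :=
      funext fun x => (hhas x).deriv
    refine ⟨contDiff_succ_iff_deriv.2 ⟨fun x => (hhas x).differentiableAt, by simp, hderiv ▸ hC⟩,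
      fun k hk => ?_⟩
    rcases k with _ | k
    · simp
    · rw [iteratedDeriv_succ', hderiv, hD k (by omega), iteratedDeriv_succ']

/-- On `(0,1)` this is `(2u-1)/(u^τ(1-u)^τ)` (`psi₁_eq`); outside, its value is irrelevant. -/
noncomputable def psi₁ (τ u : ℝ) : ℝ := (2 * u - 1) * (u * (1 - u)) ^ (-τ)

noncomputable def psi₁' (τ u : ℝ) : ℝ :=
  2 * (u * (1 - u)) ^ (-τ) + τ * (2 * u - 1) ^ 2 * (u * (1 - u)) ^ (-(τ + 1))

noncomputable def psi₁Term (g : ℝ → ℝ) (τ : ℝ) (a m : ℕ) (s : ℝ) (u : ℝ) : ℝ :=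
  iteratedDeriv a g (psi₁ τ u) * (2 * u - 1) ^ m * (u * (1 - u)) ^ (-s)

/-- Positivity of `s` is what lets the decay of `g^{(a)}` beat `(u(1-u))^{-s}` at the ends. -/
noncomputable def psi₁TermSpan (g : ℝ → ℝ) (τ : ℝ) (k : ℕ) : Submodule ℝ (ℝ → ℝ) :=
  Submodule.span ℝ {h | ∃ (a m : ℕ) (s : ℝ), a ≤ k ∧ 0 < s ∧ psi₁Term g τ a m s = h}

section Psi₁

variable {τ u : ℝ}

theorem mul_one_sub_pos_of_mem_Ioo (hu : u ∈ Ioo (0 : ℝ) 1) : 0 < u * (1 - u) :=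
  mul_pos hu.1 (sub_pos.2 hu.2)

theorem psi₁_eq (hu : u ∈ Ioo (0 : ℝ) 1) : psi₁ τ u = (2 * u - 1) / (u ^ τ * (1 - u) ^ τ) := by
  rw [psi₁, Real.rpow_neg (mul_one_sub_pos_of_mem_Ioo hu).le,
    Real.mul_rpow hu.1.le (sub_pos.2 hu.2).le, div_eq_mul_inv]

theorem psi₁'_eq (hu : u ∈ Ioo (0 : ℝ) 1) : psi₁' τ u =
    2 / (u ^ τ * (1 - u) ^ τ) + τ * (2 * u - 1) ^ 2 / (u ^ (τ + 1) * (1 - u) ^ (τ + 1)) := by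
  have hv := (mul_one_sub_pos_of_mem_Ioo hu).le
  rw [psi₁', Real.rpow_neg hv, Real.rpow_neg hv, Real.mul_rpow hu.1.le (sub_pos.2 hu.2).le,
    Real.mul_rpow hu.1.le (sub_pos.2 hu.2).le, div_eq_mul_inv, div_eq_mul_inv]

theorem hasDerivAt_mul_one_sub_rpow_neg (s : ℝ) (hu : u ∈ Ioo (0 : ℝ) 1) :
    HasDerivAt (fun x => (x * (1 - x)) ^ (-s))
      (s * (2 * u - 1) * (u * (1 - u)) ^ (-(s + 1))) u := by
  have h := (Real.hasDerivAt_rpow_const (p := -s)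
    (Or.inl (mul_one_sub_pos_of_mem_Ioo hu).ne')).comp u
    ((hasDerivAt_id u).mul ((hasDerivAt_const u 1).sub (hasDerivAt_id u)))
  refine h.congr_deriv ?_
  rw [show -s - 1 = -(s + 1) by ring]
  simp only [id, Pi.sub_apply]
  ring

theorem hasDerivAt_psi₁ (hu : u ∈ Ioo (0 : ℝ) 1) : HasDerivAt (psi₁ τ) (psi₁' τ u) u := by
  have h := (((hasDerivAt_id u).const_mul 2).sub_const 1).mul (hasDerivAt_mul_one_sub_rpow_neg τ hu)
  refine h.congr_deriv ?_
  simp only [psi₁', id]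
  ring

/-- At `m = 0` the truncated `m - 1` is harmless: its coefficient `2 * m` vanishes. -/
theorem hasDerivAt_psi₁Term {g : ℝ → ℝ} {r a : ℕ} (hg : ContDiff ℝ r g) (ha : a < r) (m : ℕ)
    (s : ℝ) (hu : u ∈ Ioo (0 : ℝ) 1) :
    HasDerivAt (psi₁Term g τ a m s)
      (2 * psi₁Term g τ (a + 1) m (s + τ) u + τ * psi₁Term g τ (a + 1) (m + 2) (s + τ + 1) u +
        2 * m * psi₁Term g τ a (m - 1) s u + s * psi₁Term g τ a (m + 1) (s + 1) u) u := by
  have hG : HasDerivAt (iteratedDeriv a g) (iteratedDeriv (a + 1) g (psi₁ τ u)) (psi₁ τ u) := by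
    rw [iteratedDeriv_succ]
    exact ((hg.differentiable_iteratedDeriv a (by exact_mod_cast ha)) _).hasDerivAt
  have h := ((hG.comp u (hasDerivAt_psi₁ hu)).mul
    ((((hasDerivAt_id u).const_mul 2).sub_const 1).pow m)).mul
    (hasDerivAt_mul_one_sub_rpow_neg s hu)
  refine h.congr_deriv ?_
  have hv := mul_one_sub_pos_of_mem_Ioo hu
  simp only [psi₁Term, psi₁', id, Function.comp, Pi.mul_apply, Pi.pow_apply]
  rw [show -(s + τ) = -s + -τ by ring, show -(s + τ + 1) = -s + -(τ + 1) by ring,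
    Real.rpow_add hv, Real.rpow_add hv]
  ring

theorem psi₁Term_mem_psi₁TermSpan {g : ℝ → ℝ} {k a m : ℕ} {s : ℝ} (ha : a ≤ k) (hs : 0 < s) :
    psi₁Term g τ a m s ∈ psi₁TermSpan g τ k :=
  Submodule.subset_span ⟨a, m, s, ha, hs, rfl⟩

theorem exists_hasDerivAt_of_mem_psi₁TermSpan {g h : ℝ → ℝ} {r k : ℕ} (hτ : 0 ≤ τ)
    (hg : ContDiff ℝ r g) (hk : k < r) (hh : h ∈ psi₁TermSpan g τ k) :
    ∃ h' ∈ psi₁TermSpan g τ (k + 1), ∀ u ∈ Ioo (0 : ℝ) 1, HasDerivAt h (h' u) u := by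
  induction hh using Submodule.span_induction with
  | mem h hh =>
    obtain ⟨a, m, s, ha, hs, rfl⟩ := hh
    refine ⟨(2 : ℝ) • psi₁Term g τ (a + 1) m (s + τ) +
      τ • psi₁Term g τ (a + 1) (m + 2) (s + τ + 1) + (2 * m : ℝ) • psi₁Term g τ a (m - 1) s +
      s • psi₁Term g τ a (m + 1) (s + 1), ?_,
      fun u hu => (hasDerivAt_psi₁Term hg (by omega : a < r) m s hu).congr_deriv (by simp)⟩
    refine add_mem (add_mem (add_mem ?_ ?_) ?_) ?_ <;> refine Submodule.smul_mem _ _ ?_ <;>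
      exact psi₁Term_mem_psi₁TermSpan (by omega) (by positivity)
  | zero => exact ⟨0, zero_mem _, fun u _ => hasDerivAt_const u 0⟩
  | add h₁ h₂ _ _ ih₁ ih₂ =>
    obtain ⟨h₁', hm₁, hd₁⟩ := ih₁
    obtain ⟨h₂', hm₂, hd₂⟩ := ih₂
    exact ⟨h₁' + h₂', add_mem hm₁ hm₂, fun u hu => (hd₁ u hu).add (hd₂ u hu)⟩
  | smul c h _ ih =>
    obtain ⟨h', hm, hd⟩ := ih
    exact ⟨c • h', Submodule.smul_mem _ c hm, fun u hu => (hd u hu).const_mul c⟩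

theorem exists_eqOn_iteratedDeriv_mem_psi₁TermSpan {g f : ℝ → ℝ} {r k : ℕ} (hτ : 0 ≤ τ)
    (hg : ContDiff ℝ r g) (hf : f ∈ psi₁TermSpan g τ 0) (hk : k ≤ r) :
    ∃ h ∈ psi₁TermSpan g τ k, EqOn (iteratedDeriv k f) h (Ioo 0 1) := by
  induction k with
  | zero => exact ⟨f, hf, fun u _ => by rw [iteratedDeriv_zero]⟩
  | succ k ih =>
    obtain ⟨h, hh, hfh⟩ := ih (by omega)
    obtain ⟨h', hh', hd⟩ := exists_hasDerivAt_of_mem_psi₁TermSpan hτ hg (by omega) hh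
    refine ⟨h', hh', fun u hu => ?_⟩
    rw [iteratedDeriv_succ, Filter.EventuallyEq.deriv_eq (eventually_of_mem
      (isOpen_Ioo.mem_nhds hu) hfh), (hd u hu).deriv]

theorem Ioo_mem_nhdsGT_zero_sup_nhdsLT_one : Ioo (0 : ℝ) 1 ∈ 𝓝[>] 0 ⊔ 𝓝[<] 1 :=
  mem_sup.2 ⟨Ioo_mem_nhdsGT one_pos, Ioo_mem_nhdsLT one_pos⟩

theorem tendsto_mul_one_sub_nhdsGT_zero_sup_nhdsLT_one :
    Tendsto (fun u : ℝ => u * (1 - u)) (𝓝[>] 0 ⊔ 𝓝[<] 1) (𝓝[>] 0) := by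
  have hcont : Continuous fun u : ℝ => u * (1 - u) := by fun_prop
  refine tendsto_nhdsWithin_iff.2 ⟨tendsto_sup.2 ⟨?_, ?_⟩, ?_⟩
  · exact (hcont.tendsto' 0 0 (by simp)).mono_left nhdsWithin_le_nhds
  · exact (hcont.tendsto' 1 0 (by simp)).mono_left nhdsWithin_le_nhds
  · exact mem_of_superset Ioo_mem_nhdsGT_zero_sup_nhdsLT_one fun u hu =>
      mul_one_sub_pos_of_mem_Ioo hu

theorem tendsto_psi₁_nhdsGT_zero (hτ : 0 < τ) : Tendsto (psi₁ τ) (𝓝[>] 0) atBot := by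
  refine Tendsto.neg_mul_atTop (C := -1) (by norm_num) ?_
    ((tendsto_rpow_neg_nhdsGT_zero (neg_neg_of_pos hτ)).comp
      (tendsto_mul_one_sub_nhdsGT_zero_sup_nhdsLT_one.mono_left le_sup_left))
  exact ((continuous_const.mul continuous_id).sub continuous_const).tendsto' 0 (-1) (by norm_num)
    |>.mono_left nhdsWithin_le_nhds

theorem tendsto_psi₁_nhdsLT_one (hτ : 0 < τ) : Tendsto (psi₁ τ) (𝓝[<] 1) atTop := by
  refine Tendsto.pos_mul_atTop (C := 1) one_pos ?_
    ((tendsto_rpow_neg_nhdsGT_zero (neg_neg_of_pos hτ)).comp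
      (tendsto_mul_one_sub_nhdsGT_zero_sup_nhdsLT_one.mono_left le_sup_right))
  exact ((continuous_const.mul continuous_id).sub continuous_const).tendsto' 1 1 (by norm_num)
    |>.mono_left nhdsWithin_le_nhds

theorem tendsto_psi₁_cocompact (hτ : 0 < τ) :
    Tendsto (psi₁ τ) (𝓝[>] 0 ⊔ 𝓝[<] 1) (cocompact ℝ) := by
  rw [cocompact_eq_atBot_atTop]
  exact tendsto_sup.2 ⟨(tendsto_psi₁_nhdsGT_zero hτ).mono_right le_sup_left,
    (tendsto_psi₁_nhdsLT_one hτ).mono_right le_sup_right⟩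

theorem eventually_half_le_abs_two_mul_sub_one :
    ∀ᶠ u : ℝ in 𝓝[>] 0 ⊔ 𝓝[<] 1, 1 / 2 ≤ |2 * u - 1| := by
  refine eventually_sup.2 ⟨?_, ?_⟩
  · filter_upwards [Ioo_mem_nhdsGT (show (0 : ℝ) < 1 / 4 by norm_num)] with u hu
    rw [abs_of_neg (by linarith [hu.2])]
    linarith [hu.2]
  · filter_upwards [Ioo_mem_nhdsLT (show (3 / 4 : ℝ) < 1 by norm_num)] with u hu
    rw [abs_of_pos (by linarith [hu.1])]
    linarith [hu.1]

theorem rpow_neg_le_abs_psi₁_rpow {s : ℝ} (hτ : 0 < τ) (hs : 0 ≤ s) (hu : u ∈ Ioo (0 : ℝ) 1)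
    (hhalf : 1 / 2 ≤ |2 * u - 1|) :
    (u * (1 - u)) ^ (-s) ≤ 2 ^ (s / τ) * |psi₁ τ u| ^ (s / τ) := by
  have hv := mul_one_sub_pos_of_mem_Ioo hu
  have hw : 0 ≤ (u * (1 - u)) ^ (-τ) := Real.rpow_nonneg hv.le _
  have hψ : (u * (1 - u)) ^ (-τ) ≤ 2 * |psi₁ τ u| := by
    rw [psi₁, abs_mul, abs_of_nonneg hw]
    nlinarith
  calc (u * (1 - u)) ^ (-s) = ((u * (1 - u)) ^ (-τ)) ^ (s / τ) := by
        rw [← Real.rpow_mul hv.le]; congr 1; field_simp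
    _ ≤ (2 * |psi₁ τ u|) ^ (s / τ) := Real.rpow_le_rpow hw hψ (by positivity)
    _ = 2 ^ (s / τ) * |psi₁ τ u| ^ (s / τ) := Real.mul_rpow (by norm_num) (abs_nonneg _)

theorem tendsto_psi₁Term {g : ℝ → ℝ} {a : ℕ} (m : ℕ) {s : ℝ} (hτ : 0 < τ) (hs : 0 ≤ s)
    (hdecay : Tendsto (fun x => |x| ^ (s / τ) * |iteratedDeriv a g x|) (cocompact ℝ) (𝓝 0)) :
    Tendsto (psi₁Term g τ a m s) (𝓝[>] 0 ⊔ 𝓝[<] 1) (𝓝 0) := by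
  have hbound := (hdecay.comp (tendsto_psi₁_cocompact hτ)).const_mul (2 ^ (s / τ))
  rw [mul_zero] at hbound
  refine squeeze_zero_norm' ?_ hbound
  filter_upwards [Ioo_mem_nhdsGT_zero_sup_nhdsLT_one, eventually_half_le_abs_two_mul_sub_one]
    with u hu hhalf
  have hm : |2 * u - 1| ^ m ≤ 1 :=
    pow_le_one₀ (abs_nonneg _) (abs_le.2 ⟨by linarith [hu.1], by linarith [hu.2]⟩)
  have hv : 0 ≤ (u * (1 - u)) ^ (-s) := Real.rpow_nonneg (mul_one_sub_pos_of_mem_Ioo hu).le _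
  calc ‖psi₁Term g τ a m s u‖
      = |iteratedDeriv a g (psi₁ τ u)| * |2 * u - 1| ^ m * (u * (1 - u)) ^ (-s) := by
        rw [Real.norm_eq_abs, psi₁Term, abs_mul, abs_mul, abs_pow, abs_of_nonneg hv]
    _ ≤ |iteratedDeriv a g (psi₁ τ u)| * 1 * (2 ^ (s / τ) * |psi₁ τ u| ^ (s / τ)) := by
        gcongr
        exact rpow_neg_le_abs_psi₁_rpow hτ hs hu hhalf
    _ = 2 ^ (s / τ) * (|psi₁ τ u| ^ (s / τ) * |iteratedDeriv a g (psi₁ τ u)|) := by ring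

theorem tendsto_of_mem_psi₁TermSpan {g h : ℝ → ℝ} {k : ℕ} (hτ : 0 < τ)
    (hdecay : ∀ c : ℝ, 0 < c → ∀ a ≤ k,
      Tendsto (fun x => |x| ^ c * |iteratedDeriv a g x|) (cocompact ℝ) (𝓝 0))
    (hh : h ∈ psi₁TermSpan g τ k) : Tendsto h (𝓝[>] 0 ⊔ 𝓝[<] 1) (𝓝 0) := by
  induction hh using Submodule.span_induction with
  | mem h hh =>
    obtain ⟨a, m, s, ha, hs, rfl⟩ := hh
    exact tendsto_psi₁Term m hτ hs.le (hdecay _ (div_pos hs hτ) a ha)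
  | zero => exact tendsto_const_nhds
  | add h₁ h₂ _ _ ih₁ ih₂ =>
    have h := ih₁.add ih₂
    rwa [add_zero] at h
  | smul c h _ ih =>
    have h := ih.const_smul c
    rwa [smul_zero] at h

theorem comp_psi₁_mul_psi₁'_mem_psi₁TermSpan (g : ℝ → ℝ) (hτ : 0 < τ) :
    (fun u => g (psi₁ τ u) * psi₁' τ u) ∈ psi₁TermSpan g τ 0 := by
  have h : (fun u => g (psi₁ τ u) * psi₁' τ u) =
      (2 : ℝ) • psi₁Term g τ 0 0 τ + τ • psi₁Term g τ 0 2 (τ + 1) := by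
    funext u
    simp only [psi₁Term, psi₁', iteratedDeriv_zero, Pi.add_apply, Pi.smul_apply, smul_eq_mul]
    ring
  rw [h]
  exact add_mem (Submodule.smul_mem _ _ (psi₁Term_mem_psi₁TermSpan le_rfl hτ))
    (Submodule.smul_mem _ _ (psi₁Term_mem_psi₁TermSpan le_rfl (by positivity)))

theorem contDiffOn_psi₁ {n : WithTop ℕ∞} : ContDiffOn ℝ n (psi₁ τ) (Ioo 0 1) := by
  unfold psi₁
  fun_prop (disch := exact fun u hu => (mul_one_sub_pos_of_mem_Ioo hu).ne')

theorem contDiffOn_psi₁' {n : WithTop ℕ∞} : ContDiffOn ℝ n (psi₁' τ) (Ioo 0 1) := by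
  unfold psi₁'
  fun_prop (disch := exact fun u hu => (mul_one_sub_pos_of_mem_Ioo hu).ne')

theorem psi₁'_pos (hτ : 0 ≤ τ) (hu : u ∈ Ioo (0 : ℝ) 1) : 0 < psi₁' τ u := by
  have hv := mul_one_sub_pos_of_mem_Ioo hu
  have := Real.rpow_pos_of_pos hv (-τ)
  have := Real.rpow_pos_of_pos hv (-(τ + 1))
  unfold psi₁'
  positivity

theorem strictMonoOn_psi₁ (hτ : 0 ≤ τ) : StrictMonoOn (psi₁ τ) (Ioo 0 1) :=
  strictMonoOn_of_deriv_pos (convex_Ioo 0 1) (contDiffOn_psi₁ (n := 0)).continuousOn fun u hu => by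
    rw [interior_Ioo] at hu
    rw [(hasDerivAt_psi₁ hu).deriv]
    exact psi₁'_pos hτ hu

theorem psi₁_image_Ioo (hτ : 0 < τ) : psi₁ τ '' Ioo 0 1 = univ :=
  eq_univ_of_univ_subset <| (contDiffOn_psi₁ (n := 0)).continuousOn.surjOn_of_tendsto
    (nonempty_Ioo.2 one_pos)
    ((tendsto_comp_coe_Ioo_atBot one_pos).2 (tendsto_psi₁_nhdsGT_zero hτ))
    ((tendsto_comp_coe_Ioo_atTop one_pos).2 (tendsto_psi₁_nhdsLT_one hτ))

theorem integral_comp_psi₁_mul_psi₁' (g : ℝ → ℝ) (hτ : 0 < τ) :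
    ∫ u in Ioo 0 1, g (psi₁ τ u) * psi₁' τ u = ∫ x, g x := by
  have h := integral_image_eq_integral_abs_deriv_smul measurableSet_Ioo
    (fun u hu => (hasDerivAt_psi₁ hu).hasDerivWithinAt) (strictMonoOn_psi₁ hτ.le).injOn g
  rw [psi₁_image_Ioo hτ, setIntegral_univ] at h
  rw [h]
  refine setIntegral_congr_fun measurableSet_Ioo fun u hu => ?_
  rw [abs_of_pos (psi₁'_pos hτ.le hu), smul_eq_mul, mul_comm]

end Psi₁

theorem stmt_17_general (r : ℕ) (τ : ℝ) (hτ : 0 < τ)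
    (g : ℝ → ℝ) (hg : ContDiff ℝ (r : ℕ∞) g)
    (hdecay : ∀ c : ℝ, 0 < c → ∀ a : ℕ, a ≤ r →
      Tendsto (fun x => |x| ^ c * |iteratedDeriv a g x|) (cocompact ℝ) (nhds 0))
    (ψ ψ' : ℝ → ℝ)
    (hψ : ∀ u : ℝ, ψ u = (2 * u - 1) / (u ^ τ * (1 - u) ^ τ))
    (hψ' : ∀ u : ℝ, ψ' u =
      2 / (u ^ τ * (1 - u) ^ τ) +
        τ * (2 * u - 1) ^ 2 / (u ^ (τ + 1) * (1 - u) ^ (τ + 1))) :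
    ∃ F : ℝ → ℝ, ContDiffOn ℝ (r : ℕ∞) F (Set.Icc 0 1) ∧
      (∀ u ∈ Set.Ioo (0 : ℝ) 1, F u = g (ψ u) * ψ' u) ∧
      (∀ a : ℕ, a ≤ r → iteratedDerivWithin a F (Set.Icc 0 1) 0 = 0 ∧
        iteratedDerivWithin a F (Set.Icc 0 1) 1 = 0) ∧
      ∫ u in Set.Icc (0 : ℝ) 1, F u = ∫ x, g x := by
  set f := fun u => g (psi₁ τ u) * psi₁' τ u
  have hg' : ContDiff ℝ r g := by exact_mod_cast hg
  have hf : ContDiffOn ℝ r f (Ioo 0 1) :=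
    (hg'.comp_contDiffOn contDiffOn_psi₁).mul contDiffOn_psi₁'
  have hlim (k : ℕ) (hk : k ≤ r) : Tendsto (iteratedDeriv k f) (𝓝[>] 0 ⊔ 𝓝[<] 1) (𝓝 0) := by
    obtain ⟨h, hh, hfh⟩ := exists_eqOn_iteratedDeriv_mem_psi₁TermSpan hτ.le hg'
      (comp_psi₁_mul_psi₁'_mem_psi₁TermSpan g hτ) hk
    exact (tendsto_of_mem_psi₁TermSpan hτ (fun c hc a ha => hdecay c hc a (ha.trans hk)) hh).congr'
      (EventuallyEq.symm (eventually_of_mem Ioo_mem_nhdsGT_zero_sup_nhdsLT_one hfh))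
  obtain ⟨hF, hFderiv⟩ := contDiff_indicator_Ioo hf (fun k hk => (tendsto_sup.1 (hlim k hk)).1)
    (fun k hk => (tendsto_sup.1 (hlim k hk)).2)
  have hvanish (a : ℕ) (ha : a ≤ r) (x : ℝ) (hx : x ∈ Icc (0 : ℝ) 1) (hx' : x ∉ Ioo (0 : ℝ) 1) :
      iteratedDerivWithin a ((Ioo 0 1).indicator f) (Icc 0 1) x = 0 := by
    rw [iteratedDerivWithin_eq_iteratedDeriv (uniqueDiffOn_Icc one_pos)
      (hF.contDiffAt.of_le (by exact_mod_cast ha)) hx, hFderiv a ha, indicator_of_notMem hx']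
  refine ⟨(Ioo 0 1).indicator f, by exact_mod_cast hF.contDiffOn, fun u hu => ?_,
    fun a ha => ⟨hvanish a ha 0 (by simp) (by simp), hvanish a ha 1 (by simp) (by simp)⟩, ?_⟩
  · rw [indicator_of_mem hu, hψ, hψ', ← psi₁_eq hu, ← psi₁'_eq hu]
  · rw [integral_Icc_eq_integral_Ioo, ← integral_comp_psi₁_mul_psi₁' g hτ]
    exact setIntegral_congr_fun measurableSet_Ioo fun u hu => indicator_of_mem hu f

/-- Transforming an integral over `ℝ` into the integral of a vanishing function on `[0,1]`:
if `g ∈ C^r(ℝ) ∩ L₁(ℝ)` satisfies `|x|^c |g^{(a)}(x)| → 0` as `|x| → ∞` for all `c > 0`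
and `0 ≤ a ≤ r`, and `ψ₁(u) = (2u-1)/(u^τ(1-u)^τ)` for some `τ > 0`, then
`f(u) = g(ψ₁(u)) ψ₁'(u)` on `(0,1)` extends to a function `F ∈ C^r_0([0,1])` (i.e. `F` and
all its derivatives up to order `r` vanish at `0` and `1`) with `∫_0^1 F = ∫_ℝ g`. -/
theorem stmt_17 (r : ℕ) (hr : 1 ≤ r) (τ : ℝ) (hτ : 0 < τ)
    (g : ℝ → ℝ) (hg : ContDiff ℝ (r : ℕ∞) g) (hint : MeasureTheory.Integrable g)
    (hdecay : ∀ c : ℝ, 0 < c → ∀ a : ℕ, a ≤ r →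
      Tendsto (fun x => |x| ^ c * |iteratedDeriv a g x|) (cocompact ℝ) (nhds 0))
    (ψ ψ' : ℝ → ℝ)
    (hψ : ∀ u : ℝ, ψ u = (2 * u - 1) / (u ^ τ * (1 - u) ^ τ))
    (hψ' : ∀ u : ℝ, ψ' u =
      2 / (u ^ τ * (1 - u) ^ τ) +
        τ * (2 * u - 1) ^ 2 / (u ^ (τ + 1) * (1 - u) ^ (τ + 1))) :
    ∃ F : ℝ → ℝ, ContDiffOn ℝ (r : ℕ∞) F (Set.Icc 0 1) ∧
      (∀ u ∈ Set.Ioo (0 : ℝ) 1, F u = g (ψ u) * ψ' u) ∧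
      (∀ a : ℕ, a ≤ r → iteratedDerivWithin a F (Set.Icc 0 1) 0 = 0 ∧
        iteratedDerivWithin a F (Set.Icc 0 1) 1 = 0) ∧
      ∫ u in Set.Icc (0 : ℝ) 1, F u = ∫ x, g x :=
  stmt_17_general r τ hτ g hg hdecay ψ ψ' hψ hψ'
end ExtensionByZero
end
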